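/- Let f be a submodular function on a finite ground set N, let X ⊆ Y ⊆ N, u ∈ Y \ X, and S ⊆ N. Set a = f(X ∪ {u}) − f(X), b = f(Y \ {u}) − f(Y), O = (S ∪ X) ∩ Y, and define p = 1 if b ≤ 0, p = 0 if b > 0 and a ≤ 0, and p = a/(a+b) otherwise. Then for every α ∈ [0, 1/2]: (α/2)·p·a + (1 − 3α/2)·(1 − p)·b ≥ α·[ p·(f(O) − f(O ∪ {u})) + (1 − p)·(f(O) − f(O \ {u})) ]. -/

import Mathlib

/-!
Submodularity gives diminishing returns, which controls both marginals at `O`: if `u ∈ O` then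
adding `u` changes nothing and removing it loses at most `a`; if `u ∉ O` then removing `u`
changes nothing and adding it loses at most `b`. It therefore suffices that `r (1 - p) a` and
`r p b` are both at most the left-hand side. For `p = a / (a + b)` both equal `r a b / (a + b)`,
and `r a b ≤ (r/2) a² + (1 - 3r/2) b²` because the difference is `(r/2)(a - b)² + (1 - 2r) b²`.
-/

open Finset

def IsSubmodular {α : Type*} [DecidableEq α] (f : Finset α → ℝ) : Prop :=
  ∀ S T : Finset α, f (S ∪ T) + f (S ∩ T) ≤ f S + f T

theorem IsSubmodular.marginal_le_of_subset {α : Type*} [DecidableEq α] {f : Finset α → ℝ}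
    (hf : IsSubmodular f) {A B : Finset α} (hAB : A ⊆ B) {u : α} (hu : u ∉ B) :
    f (B ∪ {u}) - f B ≤ f (A ∪ {u}) - f A := by
  have h := hf (A ∪ {u}) B
  rw [show A ∪ {u} ∪ B = B ∪ {u} by grind, show (A ∪ {u}) ∩ B = A by grind] at h
  linarith

noncomputable def doubleGreedyProb (a b : ℝ) : ℝ :=
  if b ≤ 0 then 1 else if a ≤ 0 then 0 else a / (a + b)

section doubleGreedyProb

variable {a b p r : ℝ}

theorem doubleGreedyProb_mem_Icc (a b : ℝ) : doubleGreedyProb a b ∈ Set.Icc 0 1 := by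
  unfold doubleGreedyProb
  split_ifs with hb ha
  · simp
  · simp
  · push Not at hb ha
    exact ⟨by positivity, (div_le_one (by linarith)).mpr (by linarith)⟩

theorem doubleGreedyProb_loss_le_gain (hp : p = doubleGreedyProb a b) (hab : 0 ≤ a + b)
    (hr0 : 0 ≤ r) (hr1 : r ≤ 1 / 2) :
    r * ((1 - p) * a) ≤ r / 2 * (p * a) + (1 - 3 * r / 2) * ((1 - p) * b) ∧
      r * (p * b) ≤ r / 2 * (p * a) + (1 - 3 * r / 2) * ((1 - p) * b) := by
  subst hp
  unfold doubleGreedyProb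
  split_ifs with hb ha
  · constructor <;> nlinarith
  · constructor <;> nlinarith
  · push Not at hb ha
    have hs : 0 < a + b := by linarith
    have hq : 1 - a / (a + b) = b / (a + b) := by field_simp; ring
    have key : 0 ≤ (r / 2 * (a - b) ^ 2 + (1 - 2 * r) * b ^ 2) / (a + b) := by
      apply div_nonneg _ hs.le; nlinarith [sq_nonneg (a - b), sq_nonneg b]
    simp only [hq]
    constructor <;> rw [← sub_nonneg] <;> convert key using 1 <;> field_simp <;> ring

end doubleGreedyProb

/-- **One step of randomized Double Greedy.**
For a submodular `f`, sets `X ⊆ Y`, an element `u ∈ Y \ X`, and any `S`, with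
`a = f (X ∪ {u}) − f X`, `b = f (Y \ {u}) − f Y`, `O = (S ∪ X) ∩ Y`, and
`p = 1` if `b ≤ 0`, `p = 0` if `b > 0` and `a ≤ 0`, and `p = a/(a+b)` otherwise,
for every `r ∈ [0, 1/2]`:
`(r/2)·p·a + (1 − 3r/2)·(1 − p)·b ≥ r·[p·(f O − f (O ∪ {u})) + (1 − p)·(f O − f (O \ {u}))]`. -/
theorem randomized_double_greedy_step
    {α : Type*} [DecidableEq α]
    (f : Finset α → ℝ)
    (hf_sub : ∀ S T : Finset α, f (S ∪ T) + f (S ∩ T) ≤ f S + f T)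
    (X Y S : Finset α) (hXY : X ⊆ Y) (u : α) (huY : u ∈ Y) (huX : u ∉ X)
    (a b : ℝ) (ha : a = f (X ∪ {u}) - f X) (hb : b = f (Y \ {u}) - f Y)
    (O : Finset α) (hO : O = (S ∪ X) ∩ Y)
    (p : ℝ) (hp : p = if b ≤ 0 then 1 else if a ≤ 0 then 0 else a / (a + b))
    (r : ℝ) (hr0 : 0 ≤ r) (hr1 : r ≤ 1 / 2) :
    r / 2 * (p * a) + (1 - 3 * r / 2) * ((1 - p) * b) ≥
      r * (p * (f O - f (O ∪ {u})) + (1 - p) * (f O - f (O \ {u}))) := by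
  have hf : IsSubmodular f := hf_sub
  have hY : Y \ {u} ∪ {u} = Y := sdiff_union_of_subset (singleton_subset_iff.mpr huY)
  have hXO : X ⊆ O := hO ▸ subset_inter subset_union_right hXY
  have hOY : O ⊆ Y := hO ▸ inter_subset_right
  have hab : 0 ≤ a + b := by
    have := hf.marginal_le_of_subset (A := X) (B := Y \ {u}) (u := u) (by grind) (by simp)
    rw [hY] at this
    linarith
  replace hp : p = doubleGreedyProb a b := hp
  obtain ⟨hp0, hp1⟩ : p ∈ Set.Icc 0 1 := hp ▸ doubleGreedyProb_mem_Icc a b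
  obtain ⟨hgain_a, hgain_b⟩ := doubleGreedyProb_loss_le_gain hp hab hr0 hr1
  by_cases huO : u ∈ O
  · have hunion : O ∪ {u} = O := union_eq_left.mpr (singleton_subset_iff.mpr huO)
    have hloss : f O - f (O \ {u}) ≤ a := by
      have := hf.marginal_le_of_subset (A := X) (B := O \ {u}) (u := u) (by grind) (by simp)
      rwa [sdiff_union_of_subset (singleton_subset_iff.mpr huO), ← ha] at this
    rw [hunion]
    nlinarith [mul_le_mul_of_nonneg_left hloss (mul_nonneg hr0 (sub_nonneg.mpr hp1))]
  · have hdiff : O \ {u} = O := sdiff_singleton_eq_erase u O ▸ erase_eq_of_notMem huO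
    have hloss : f O - f (O ∪ {u}) ≤ b := by
      have := hf.marginal_le_of_subset (A := O) (B := Y \ {u}) (u := u) (by grind) (by simp)
      rw [hY] at this
      linarith
    rw [hdiff]
    nlinarith [mul_le_mul_of_nonneg_left hloss (mul_nonneg hr0 hp0)]
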